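/- Let u : H^n -> R be a smooth positive bounded function with u -> 1 at infinity, equal to 1 outside a compact set, and satisfying -4(n-1)/(n-2) Delta_b u <= n(n-1)(u - u^{(n+2)/(n-2)}) on H^n. Then u <= 1 everywhere on H^n. -/

import Mathlib

noncomputable section

open Real Filter

/-- Partial derivative of a real-valued function in the `i`-th coordinate direction. -/
def pd {n : ℕ} (f : EuclideanSpace ℝ (Fin n) → ℝ) (i : Fin n)
    (x : EuclideanSpace ℝ (Fin n)) : ℝ :=
  fderiv ℝ f x (EuclideanSpace.single i 1)

/-- Inverse metric components `g^{ij}`. -/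
def ginv {n : ℕ} (g : EuclideanSpace ℝ (Fin n) → Fin n → Fin n → ℝ)
    (x : EuclideanSpace ℝ (Fin n)) (i j : Fin n) : ℝ :=
  (Matrix.of (g x))⁻¹ i j

/-- Christoffel symbols `Γ^i_{jk}` of the metric `g` in coordinates. -/
def christoffel {n : ℕ} (g : EuclideanSpace ℝ (Fin n) → Fin n → Fin n → ℝ)
    (i j k : Fin n) (x : EuclideanSpace ℝ (Fin n)) : ℝ :=
  (1/2) * ∑ l, ginv g x i l *
    (pd (fun y => g y l j) k x + pd (fun y => g y l k) j x - pd (fun y => g y j k) l x)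

/-- Riemann curvature tensor `R^i_{jkl}` of `g` in coordinates. -/
def riemann {n : ℕ} (g : EuclideanSpace ℝ (Fin n) → Fin n → Fin n → ℝ)
    (i j k l : Fin n) (x : EuclideanSpace ℝ (Fin n)) : ℝ :=
  pd (christoffel g i l j) k x - pd (christoffel g i k j) l x
    + ∑ m, christoffel g i k m x * christoffel g m l j x
    - ∑ m, christoffel g i l m x * christoffel g m k j x

/-- Ricci curvature `Ric_{jl}` of `g` in coordinates. -/
def ricci {n : ℕ} (g : EuclideanSpace ℝ (Fin n) → Fin n → Fin n → ℝ)
    (j l : Fin n) (x : EuclideanSpace ℝ (Fin n)) : ℝ :=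
  ∑ i, riemann g i j i l x

/-- Scalar curvature of `g` in coordinates. -/
def scal {n : ℕ} (g : EuclideanSpace ℝ (Fin n) → Fin n → Fin n → ℝ)
    (x : EuclideanSpace ℝ (Fin n)) : ℝ :=
  ∑ j, ∑ l, ginv g x j l * ricci g j l x

/-- The Laplace–Beltrami operator of `g` (negative-spectrum convention). -/
def lapBel {n : ℕ} (g : EuclideanSpace ℝ (Fin n) → Fin n → Fin n → ℝ)
    (f : EuclideanSpace ℝ (Fin n) → ℝ) (x : EuclideanSpace ℝ (Fin n)) : ℝ :=
  ∑ i, ∑ j, ginv g x i j * (pd (pd f j) i x - ∑ k, christoffel g k i j x * pd f k x)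

/-- The Riemannian Hessian of `f` with respect to `g`, in coordinates. -/
def hess {n : ℕ} (g : EuclideanSpace ℝ (Fin n) → Fin n → Fin n → ℝ)
    (f : EuclideanSpace ℝ (Fin n) → ℝ) (i j : Fin n)
    (x : EuclideanSpace ℝ (Fin n)) : ℝ :=
  pd (pd f j) i x - ∑ k, christoffel g k i j x * pd f k x

/-- The ball model metric of hyperbolic space on the open unit ball. -/
def ballMetric (n : ℕ) (x : EuclideanSpace ℝ (Fin n)) (i j : Fin n) : ℝ :=
  (2 / (1 - ‖x‖ ^ 2)) ^ 2 * (if i = j then 1 else 0)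

open Filter Topology Metric


/-- If `g 0 = 0` and `g` has positive derivative at `0`, then `g > 0` just to the right. -/
lemma eventually_pos_right {g : ℝ → ℝ} {m : ℝ} (hg : HasDerivAt g m 0) (h0 : g 0 = 0)
    (hm : 0 < m) : ∀ᶠ t in 𝓝[>] (0 : ℝ), 0 < g t := by
  have hslope := hasDerivAt_iff_tendsto_slope.1 hg
  have h1 : ∀ᶠ t in 𝓝[≠] (0 : ℝ), 0 < slope g 0 t :=
    hslope.eventually (eventually_gt_nhds hm)
  have h2 : ∀ᶠ t in 𝓝[>] (0 : ℝ), 0 < slope g 0 t :=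
    h1.filter_mono (nhdsWithin_mono _ (fun t ht => ne_of_gt ht))
  filter_upwards [h2, self_mem_nhdsWithin] with t ht ht'
  have heq : slope g 0 t = g t / t := by simp [slope, h0, div_eq_inv_mul]
  rw [heq] at ht
  have htpos : (0:ℝ) < t := ht'
  have h3 : 0 < g t / t * t := mul_pos ht htpos
  rwa [div_mul_cancel₀ _ (ne_of_gt htpos)] at h3

/-- Second derivative test: at an interior local max, the second derivative is nonpositive. -/
lemma second_deriv_nonpos {f f' : ℝ → ℝ} {s : Set ℝ} (hso : IsOpen s) (h0 : (0:ℝ) ∈ s)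
    (hd : ∀ t ∈ s, HasDerivAt f (f' t) t) {m : ℝ} (hf' : HasDerivAt f' m 0)
    (hmax : IsLocalMax f 0) : m ≤ 0 := by
  by_contra h
  push_neg at h
  have hf'0 : f' 0 = 0 := by
    have h1 : deriv f 0 = 0 := hmax.deriv_eq_zero
    rwa [(hd 0 h0).deriv] at h1
  have hpos : ∀ᶠ t in 𝓝[>] (0:ℝ), 0 < f' t := eventually_pos_right hf' hf'0 h
  have hs' : ∀ᶠ t in 𝓝[>] (0:ℝ), t ∈ s :=
    eventually_nhdsWithin_of_eventually_nhds (hso.eventually_mem h0)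
  have hmax' : ∀ᶠ t in 𝓝[>] (0:ℝ), f t ≤ f 0 := hmax.filter_mono nhdsWithin_le_nhds
  have hall := (hpos.and hs').and hmax'
  obtain ⟨v, hv, hsub⟩ := mem_nhdsGT_iff_exists_Ioc_subset.1 hall
  have hv0 : (0:ℝ) < v := hv
  have hmono : StrictMonoOn f (Set.Icc 0 v) := by
    apply strictMonoOn_of_deriv_pos (convex_Icc 0 v)
    · intro t ht
      rcases eq_or_lt_of_le ht.1 with h'|h'
      · subst h'
        exact (hd 0 h0).continuousAt.continuousWithinAt
      · have := hsub ⟨h', ht.2⟩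
        exact (hd t this.1.2).continuousAt.continuousWithinAt
    · intro t ht
      rw [interior_Icc] at ht
      have hts := hsub ⟨ht.1, le_of_lt ht.2⟩
      rw [(hd t hts.1.2).deriv]
      exact hts.1.1
  have hlt : f 0 < f v := hmono ⟨le_refl 0, hv0.le⟩ ⟨hv0.le, le_refl v⟩ hv0
  have hle : f v ≤ f 0 := (hsub ⟨hv0, le_refl v⟩).2
  linarith

/-- Let `u : Hⁿ → ℝ` (ball model) be smooth, positive, bounded, tending to `1`
at infinity, equal to `1` outside a compact set, and satisfying
`-4(n-1)/(n-2) Δ_b u ≤ n(n-1)(u - u^{(n+2)/(n-2)})`. Then `u ≤ 1` on `Hⁿ`. -/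
theorem conformal_factor_le_one (n : ℕ) (hn : 3 ≤ n)
    (u : EuclideanSpace ℝ (Fin n) → ℝ)
    (husmooth : ContDiffOn ℝ (⊤ : ℕ∞) u (ball (0 : EuclideanSpace ℝ (Fin n)) 1))
    (hupos : ∀ x ∈ ball (0 : EuclideanSpace ℝ (Fin n)) 1, 0 < u x)
    (hbdd : ∃ C : ℝ, ∀ x ∈ ball (0 : EuclideanSpace ℝ (Fin n)) 1, u x ≤ C)
    (hlim : ∀ x₀ : EuclideanSpace ℝ (Fin n), ‖x₀‖ = 1 →
      Tendsto u (𝓝[ball (0 : EuclideanSpace ℝ (Fin n)) 1] x₀) (𝓝 1))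
    (hcompact : ∃ K : Set (EuclideanSpace ℝ (Fin n)), IsCompact K ∧
      K ⊆ ball (0 : EuclideanSpace ℝ (Fin n)) 1 ∧
      ∀ x ∈ ball (0 : EuclideanSpace ℝ (Fin n)) 1 \ K, u x = 1)
    (hineq : ∀ x ∈ ball (0 : EuclideanSpace ℝ (Fin n)) 1,
      -(4 * ((n : ℝ) - 1) / ((n : ℝ) - 2)) * lapBel (ballMetric n) u x ≤
        n * ((n : ℝ) - 1) * (u x - u x ^ (((n : ℝ) + 2) / ((n : ℝ) - 2)))) :
    ∀ x ∈ ball (0 : EuclideanSpace ℝ (Fin n)) 1, u x ≤ 1 := by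
  
  intro x hx
  obtain ⟨K, hKc, hKsub, hK1⟩ := hcompact
  by_contra hgt
  push_neg at hgt
  -- x must be in K
  have hxK : x ∈ K := by
    by_contra h
    have := hK1 x ⟨hx, h⟩
    rw [this] at hgt
    exact lt_irrefl 1 hgt
  -- maximum of u over K
  have hucont : ContinuousOn u K := husmooth.continuousOn.mono hKsub
  obtain ⟨x₀, hx₀K, hx₀max⟩ := hKc.exists_isMaxOn ⟨x, hxK⟩ hucont
  have hx₀ball : x₀ ∈ ball (0 : EuclideanSpace ℝ (Fin n)) 1 := hKsub hx₀K
  have hx₀gt : 1 < u x₀ := lt_of_lt_of_le hgt (hx₀max hxK)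
  have hmaxball : ∀ y ∈ ball (0 : EuclideanSpace ℝ (Fin n)) 1, u y ≤ u x₀ := by
    intro y hy
    by_cases hyK : y ∈ K
    · exact hx₀max hyK
    · rw [hK1 y ⟨hy, hyK⟩]; exact hx₀gt.le
  have hloc : IsLocalMax u x₀ :=
    IsMaxOn.isLocalMax (fun y hy => hmaxball y hy) (isOpen_ball.mem_nhds hx₀ball)
  have hderiv0 : fderiv ℝ u x₀ = 0 := hloc.fderiv_eq_zero
  have hpd0 : ∀ k : Fin n, pd u k x₀ = 0 := by
    intro k; unfold pd; rw [hderiv0]; rfl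
  have husm : ContDiffAt ℝ (⊤ : ℕ∞) u x₀ := husmooth.contDiffAt (isOpen_ball.mem_nhds hx₀ball)
  -- second partial derivatives at the max are nonpositive
  have hsec : ∀ i : Fin n, pd (pd u i) i x₀ ≤ 0 := by
    intro i
    set e : EuclideanSpace ℝ (Fin n) := EuclideanSpace.single i (1:ℝ) with he
    have hL : ∀ t : ℝ, HasDerivAt (fun t : ℝ => x₀ + t • e) e t := by
      intro t
      have h1 : HasDerivAt (fun t : ℝ => t • e) ((1:ℝ) • e) t := (hasDerivAt_id t).smul_const e
      simpa using h1.const_add x₀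
    set L : ℝ → EuclideanSpace ℝ (Fin n) := fun t => x₀ + t • e with hLdef
    have hL0 : L 0 = x₀ := by simp [hLdef]
    set s : Set ℝ := L ⁻¹' (ball (0 : EuclideanSpace ℝ (Fin n)) 1) with hsdef
    have hso : IsOpen s := isOpen_ball.preimage (by fun_prop)
    have h0s : (0:ℝ) ∈ s := by rw [hsdef, Set.mem_preimage, hL0]; exact hx₀ball
    have hd : ∀ t ∈ s, HasDerivAt (fun t => u (L t)) (pd u i (L t)) t := by
      intro t ht
      have hdu : DifferentiableAt ℝ u (L t) :=
        (husmooth.contDiffAt (isOpen_ball.mem_nhds ht)).differentiableAt (by simp)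
      exact hdu.hasFDerivAt.comp_hasDerivAt t (hL t)
    have hpdc : DifferentiableAt ℝ (pd u i) x₀ := by
      have h1 : ContDiffAt ℝ 1 (fderiv ℝ u) x₀ := husm.fderiv_right (WithTop.coe_le_coe.2 le_top)
      have h2 : ContDiffAt ℝ 1 (fun y => fderiv ℝ u y e) x₀ := h1.clm_apply contDiffAt_const
      exact h2.differentiableAt one_ne_zero
    have hf' : HasDerivAt (fun t => pd u i (L t)) (pd (pd u i) i x₀) 0 := by
      have hpdc' : HasFDerivAt (pd u i) (fderiv ℝ (pd u i) x₀) (L 0) :=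
        hL0.symm ▸ hpdc.hasFDerivAt
      exact hpdc'.comp_hasDerivAt 0 (hL 0)
    have hmaxf : IsLocalMax (fun t => u (L t)) 0 := by
      filter_upwards [hso.eventually_mem h0s] with t ht
      have := hmaxball (L t) ht
      simpa [hL0] using this
    exact second_deriv_nonpos hso h0s hd hf' hmaxf
  -- the inverse metric at x₀
  have hxlt : ‖x₀‖ < 1 := mem_ball_zero_iff.1 hx₀ball
  have h1x : 0 < 1 - ‖x₀‖ ^ 2 := by nlinarith [norm_nonneg x₀]
  set c : ℝ := (2 / (1 - ‖x₀‖ ^ 2)) ^ 2 with hcdef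
  have hc : 0 < c := by positivity
  have hmat : Matrix.of (ballMetric n x₀) = c • (1 : Matrix (Fin n) (Fin n) ℝ) := by
    ext i j
    simp [ballMetric, Matrix.one_apply, mul_ite, hcdef]
  have hinv : (Matrix.of (ballMetric n x₀))⁻¹ = c⁻¹ • (1 : Matrix (Fin n) (Fin n) ℝ) := by
    rw [hmat]
    apply Matrix.inv_eq_right_inv
    rw [Matrix.smul_mul, Matrix.mul_smul, smul_smul, Matrix.one_mul,
      mul_inv_cancel₀ hc.ne', one_smul]
  have hginv : ∀ i j : Fin n, ginv (ballMetric n) x₀ i j = if i = j then c⁻¹ else 0 := by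
    intro i j
    unfold ginv
    rw [hinv]
    simp [Matrix.one_apply, mul_ite]
  -- Laplacian at x₀ is nonpositive
  have hlap : lapBel (ballMetric n) u x₀ ≤ 0 := by
    unfold lapBel
    have heq : ∀ i : Fin n, ∀ j : Fin n,
        ginv (ballMetric n) x₀ i j *
          (pd (pd u j) i x₀ - ∑ k, christoffel (ballMetric n) k i j x₀ * pd u k x₀)
        = if i = j then c⁻¹ * pd (pd u j) i x₀ else 0 := by
      intro i j
      rw [hginv]
      simp [hpd0, ite_mul]
    calc ∑ i, ∑ j, ginv (ballMetric n) x₀ i j *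
          (pd (pd u j) i x₀ - ∑ k, christoffel (ballMetric n) k i j x₀ * pd u k x₀)
        = ∑ i : Fin n, c⁻¹ * pd (pd u i) i x₀ := by
          apply Finset.sum_congr rfl
          intro i _
          rw [Finset.sum_congr rfl (fun j _ => heq i j)]
          simp
      _ ≤ 0 := by
          apply Finset.sum_nonpos
          intro i _
          have h1 := hsec i
          have h2 : (0:ℝ) ≤ c⁻¹ := inv_nonneg.2 hc.le
          nlinarith
  -- contradiction with the differential inequality
  have hn3 : (3:ℝ) ≤ (n:ℝ) := by exact_mod_cast hn
  have hco : 0 < 4 * ((n:ℝ) - 1) / ((n:ℝ) - 2) := div_pos (by linarith) (by linarith)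
  have hlhs : 0 ≤ -(4 * ((n:ℝ) - 1) / ((n:ℝ) - 2)) * lapBel (ballMetric n) u x₀ := by
    have := mul_nonneg hco.le (neg_nonneg.2 hlap)
    nlinarith
  have hp : 1 < ((n:ℝ) + 2) / ((n:ℝ) - 2) := by
    rw [lt_div_iff₀ (by linarith)]
    linarith
  have hpow : u x₀ < u x₀ ^ (((n:ℝ) + 2) / ((n:ℝ) - 2)) := by
    calc u x₀ = u x₀ ^ (1:ℝ) := (Real.rpow_one _).symm
      _ < u x₀ ^ (((n:ℝ) + 2) / ((n:ℝ) - 2)) :=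
          Real.rpow_lt_rpow_of_exponent_lt hx₀gt hp
  have hrhs : (n:ℝ) * ((n:ℝ) - 1) * (u x₀ - u x₀ ^ (((n:ℝ) + 2) / ((n:ℝ) - 2))) < 0 := by
    apply mul_neg_of_pos_of_neg
    · nlinarith
    · linarith
  have hin := hineq x₀ hx₀ball
  linarith
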